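/- Let g_θ : [0,1) → ℝ be defined by g_θ(x) = 1 - 3/((√((4-x)/(1-x)) + 1)² - 1). Then for every x ∈ [0,1), g_θ(x) ∈ [0,1), and for every natural number r, the r-fold iterate g_θ^{(r)}(x) (which is well defined since g_θ maps [0,1) into itself) satisfies g_θ^{(r)}(x) = 1 - 3/((√((4-x)/(1-x)) + r)² - 1). -/

import Mathlib

/-- The offspring generating function of the skeleton decomposition. -/
noncomputable def gTheta (x : ℝ) : ℝ :=
  1 - 3 / ((Real.sqrt ((4 - x) / (1 - x)) + 1) ^ 2 - 1)

/-!
The substitution `s = √((4 - x) / (1 - x))`, with inverse `x = 1 - 3 / (s² - 1)`, is an Abel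
function for `gTheta`: it conjugates `gTheta` to the translation `s ↦ s + 1` on `(1, ∞)`, so the
`r`-th iterate is the translation by `r`. Since `s > 1` for every `x < 1`, the translated
coordinate is at least `2`, and `s ↦ 1 - 3 / (s² - 1)` maps `[2, ∞)` into `[0, 1)`.
-/

noncomputable def gThetaAbel (x : ℝ) : ℝ :=
  Real.sqrt ((4 - x) / (1 - x))

noncomputable def gThetaAbelInv (s : ℝ) : ℝ :=
  1 - 3 / (s ^ 2 - 1)

lemma gTheta_eq_gThetaAbelInv (x : ℝ) : gTheta x = gThetaAbelInv (gThetaAbel x + 1) := rfl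

lemma one_lt_gThetaAbel {x : ℝ} (hx : x < 1) : 1 < gThetaAbel x := by
  have h1x : 0 < 1 - x := sub_pos.mpr hx
  have hratio : 1 < (4 - x) / (1 - x) := by
    rw [one_lt_div h1x]
    linarith
  simpa [gThetaAbel] using Real.sqrt_lt_sqrt zero_le_one hratio

lemma gThetaAbelInv_gThetaAbel {x : ℝ} (hx : x < 1) : gThetaAbelInv (gThetaAbel x) = x := by
  have h1x : 1 - x ≠ 0 := (sub_pos.mpr hx).ne'
  have hsq : gThetaAbel x ^ 2 = (4 - x) / (1 - x) :=
    Real.sq_sqrt (div_nonneg (by linarith) (sub_pos.mpr hx).le)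
  rw [gThetaAbelInv, hsq]
  field_simp
  ring

lemma gThetaAbel_gThetaAbelInv {s : ℝ} (hs : 1 < s) : gThetaAbel (gThetaAbelInv s) = s := by
  have hs2 : s ^ 2 - 1 ≠ 0 := by nlinarith
  have hratio : (4 - gThetaAbelInv s) / (1 - gThetaAbelInv s) = s ^ 2 := by
    rw [gThetaAbelInv]
    field_simp
    ring
  rw [gThetaAbel, hratio, Real.sqrt_sq (by linarith)]

lemma gThetaAbelInv_mem_Ico {s : ℝ} (hs : 2 ≤ s) : gThetaAbelInv s ∈ Set.Ico (0 : ℝ) 1 := by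
  have hden : 3 ≤ s ^ 2 - 1 := by nlinarith
  have hpos : 0 < 3 / (s ^ 2 - 1) := div_pos three_pos (by linarith)
  have hle : 3 / (s ^ 2 - 1) ≤ 1 := (div_le_one (by linarith)).mpr hden
  exact ⟨by rw [gThetaAbelInv]; linarith, by rw [gThetaAbelInv]; linarith⟩

lemma gTheta_mem_Ico {x : ℝ} (hx : x < 1) : gTheta x ∈ Set.Ico (0 : ℝ) 1 := by
  rw [gTheta_eq_gThetaAbelInv]
  exact gThetaAbelInv_mem_Ico (by linarith [one_lt_gThetaAbel hx])

lemma gTheta_iterate {x : ℝ} (hx : x < 1) (r : ℕ) :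
    gTheta^[r] x = gThetaAbelInv (gThetaAbel x + r) := by
  induction r with
  | zero => simpa using (gThetaAbelInv_gThetaAbel hx).symm
  | succ r ih =>
    have hs : 1 < gThetaAbel x + r := by
      linarith [one_lt_gThetaAbel hx, r.cast_nonneg (α := ℝ)]
    rw [Function.iterate_succ_apply', ih, gTheta_eq_gThetaAbelInv,
      gThetaAbel_gThetaAbelInv hs, Nat.cast_succ, add_assoc]

theorem stmt_2 (x : ℝ) (hx : x ∈ Set.Ico (0 : ℝ) 1) :
    gTheta x ∈ Set.Ico (0 : ℝ) 1 ∧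
      ∀ r : ℕ, gTheta^[r] x =
        1 - 3 / ((Real.sqrt ((4 - x) / (1 - x)) + r) ^ 2 - 1) :=
  ⟨gTheta_mem_Ico hx.2, gTheta_iterate hx.2⟩
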